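/- The eigenvalues of the SU_q(2) Casimir operator C = S⁺S⁻ + ((qT)^{−1} + qT)/(q^{−1} − q)², with T = t^{⊗L}, on (C²)^{⊗L} are of the form (q^{−(2S+1)} + q^{2S+1})/(q^{−1} − q)² for S ∈ {0, 1/2, 1, ..., L/2}. -/

import Mathlib

open scoped Classical

/-- The "string operator" acting as `ℓ` left of `x`, `c` at `x`, `ρ` right of `x`. -/
noncomputable def stringOp {L : ℕ} (ℓ c ρ : Matrix (Fin 2) (Fin 2) ℂ)
    (x : Fin L) : Matrix (Fin L → Fin 2) (Fin L → Fin 2) ℂ :=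
  fun η η' => (∏ y ∈ Finset.univ.filter (fun y => y < x), ℓ (η y) (η' y)) *
    c (η x) (η' x) *
    (∏ y ∈ Finset.univ.filter (fun y => x < y), ρ (η y) (η' y))

/-!
Each string operator is a Kronecker product of `2 × 2` matrices, so products of string
operators can be computed site by site. This shows that `E = S⁺`, `F = S⁻`, `K = T`,
`K' = T⁻¹` satisfy the defining relations of `U_q(sl₂)`, and hence that the Casimir `C`
commutes with `E`, `F` and `K`.

Given an eigenvalue `μ` of `C`, take a common eigenvector of `C` and `K` and apply `F` until
the next step gives zero, then apply `E` in the same way. Both strings end, because each step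
multiplies the eigenvalue of `K` (or of `K'`) by `q²`, and `K` has only finitely many
eigenvalues. The two ends are a vector `v` with `F v = 0`, `K v = λ v` and a vector `w` with
`E w = 0`, `K' w = q^{2b} λ⁻¹ w`. Writing `C = EF + …` at `v` and `C = FE + …` at `w` shows
that `(q⁻¹ - q)² μ = g (q λ) = g (q^{2b+1} λ⁻¹)`, where `g z = z + z⁻¹`. Since `g z = g z'`
only when `z' = z` or `z' = z⁻¹`, and `q` is not a root of unity, this forces `λ² = q^{2b}`.
The eigenvalues of `T` are the powers `q^{2n-L}` with `0 ≤ n ≤ L`, so `λ = q^b` with `b ≤ L`.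
-/

section UqSl2

variable {𝕜 A : Type*} [Field 𝕜] [Ring A] [Algebra 𝕜 A]

/-- `K` acts on `E` with the factor `q⁻²`, not the usual `q²`: on the spin chain `K = T`,
and `E = S⁺` lowers the eigenvalue of `T` by `q²`. -/
structure UqSl2Relations (q : 𝕜) (E F K K' : A) : Prop where
  mul_inv : K * K' = 1
  inv_mul : K' * K = 1
  mul_E : K * E = (q ^ 2)⁻¹ • (E * K)
  mul_F : K * F = q ^ 2 • (F * K)
  commutator : E * F - F * E = (q⁻¹ - q)⁻¹ • (K - K')

def casimir (q : 𝕜) (E F K K' : A) : A :=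
  E * F + ((q⁻¹ - q) ^ 2)⁻¹ • (q⁻¹ • K' + q • K)

theorem map_casimir {B G : Type*} [Ring B] [Algebra 𝕜 B] [FunLike G A B] [AlgHomClass G 𝕜 A B]
    (f : G) (q : 𝕜) (E F K K' : A) :
    f (casimir q E F K K') = casimir q (f E) (f F) (f K) (f K') := by
  simp [casimir, map_add, map_mul, map_smul]

theorem inv_eq_inv_sq_mul (a : 𝕜) : a⁻¹ = (a ^ 2)⁻¹ * a := by
  rcases eq_or_ne a 0 with rfl | ha
  · simp
  · field_simp

namespace UqSl2Relations

variable {q : 𝕜} {E F K K' : A}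

theorem map {B G : Type*} [Ring B] [Algebra 𝕜 B] [FunLike G A B] [AlgHomClass G 𝕜 A B]
    (h : UqSl2Relations q E F K K') (f : G) :
    UqSl2Relations q (f E) (f F) (f K) (f K') where
  mul_inv := by rw [← map_mul, h.mul_inv, map_one]
  inv_mul := by rw [← map_mul, h.inv_mul, map_one]
  mul_E := by rw [← map_mul, h.mul_E, map_smul, map_mul]
  mul_F := by rw [← map_mul, h.mul_F, map_smul, map_mul]
  commutator := by rw [← map_mul, ← map_mul, ← map_sub, h.commutator, map_smul, map_sub]

theorem inv_mul_E (h : UqSl2Relations q E F K K') (hq : q ≠ 0) : K' * E = q ^ 2 • (E * K') := by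
  have hEK : E * K = q ^ 2 • (K * E) := by
    rw [h.mul_E, smul_smul, mul_inv_cancel₀ (pow_ne_zero 2 hq), one_smul]
  calc K' * E = K' * (E * K) * K' := by rw [mul_assoc, mul_assoc, h.mul_inv, mul_one]
    _ = q ^ 2 • (E * K') := by
      rw [hEK, mul_smul_comm, smul_mul_assoc, ← mul_assoc, h.inv_mul, one_mul]

theorem inv_mul_F (h : UqSl2Relations q E F K K') (hq : q ≠ 0) :
    K' * F = (q ^ 2)⁻¹ • (F * K') := by
  have hFK : F * K = (q ^ 2)⁻¹ • (K * F) := by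
    rw [h.mul_F, smul_smul, inv_mul_cancel₀ (pow_ne_zero 2 hq), one_smul]
  calc K' * F = K' * (F * K) * K' := by rw [mul_assoc, mul_assoc, h.mul_inv, mul_one]
    _ = (q ^ 2)⁻¹ • (F * K') := by
      rw [hFK, mul_smul_comm, smul_mul_assoc, ← mul_assoc, h.inv_mul, one_mul]

theorem casimir_eq (h : UqSl2Relations q E F K K') :
    casimir q E F K K' = F * E + ((q⁻¹ - q) ^ 2)⁻¹ • (q • K' + q⁻¹ • K) := by
  rw [casimir, ← sub_add_cancel (E * F) (F * E), h.commutator]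
  match_scalars <;> (try rw [inv_eq_inv_sq_mul (q⁻¹ - q)]) <;> field_simp <;> ring

theorem commute_casimir_F (h : UqSl2Relations q E F K K') (hq : q ≠ 0) :
    Commute (casimir q E F K K') F := by
  have hEF : E * F * F - F * (E * F) =
      (q⁻¹ - q)⁻¹ • (q ^ 2 • (F * K) - (q ^ 2)⁻¹ • (F * K')) := by
    rw [← mul_assoc, ← sub_mul, h.commutator, smul_mul_assoc, sub_mul, h.mul_F, h.inv_mul_F hq]
  rw [Commute, SemiconjBy, casimir]
  simp only [add_mul, mul_add, smul_mul_assoc, mul_smul_comm, h.mul_F, h.inv_mul_F hq]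
  linear_combination (norm := skip) hEF
  match_scalars <;> (try rw [inv_eq_inv_sq_mul (q⁻¹ - q)]) <;> field_simp <;> ring

theorem commute_casimir_E (h : UqSl2Relations q E F K K') (hq : q ≠ 0) :
    Commute (casimir q E F K K') E := by
  have hEF : E * (E * F) - E * F * E = (q⁻¹ - q)⁻¹ • (E * K - E * K') := by
    rw [mul_assoc, ← mul_sub, h.commutator, mul_smul_comm, mul_sub]
  rw [Commute, SemiconjBy, casimir]
  simp only [add_mul, mul_add, smul_mul_assoc, mul_smul_comm, h.mul_E, h.inv_mul_E hq]
  linear_combination (norm := skip) -hEF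
  match_scalars <;> (try rw [inv_eq_inv_sq_mul (q⁻¹ - q)]) <;> field_simp <;> ring

theorem commute_casimir_K (h : UqSl2Relations q E F K K') (hq : q ≠ 0) :
    Commute (casimir q E F K K') K := by
  have hEF : Commute K (E * F) := by
    rw [Commute, SemiconjBy, ← mul_assoc, h.mul_E, smul_mul_assoc, mul_assoc, h.mul_F,
      mul_smul_comm, smul_smul, inv_mul_cancel₀ (pow_ne_zero 2 hq), one_smul, mul_assoc]
  have hK' : Commute K' K := h.inv_mul.trans h.mul_inv.symm
  exact hEF.symm.add_left
    (((hK'.smul_left _).add_left ((Commute.refl K).smul_left _)).smul_left _)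

end UqSl2Relations

end UqSl2

namespace Module.End

variable {𝕜 V : Type*} [Field 𝕜] [AddCommGroup V] [Module 𝕜 V]

theorem apply_eq_inv_smul_of_mul_eq_one {f g : End 𝕜 V} (hgf : g * f = 1) {c : 𝕜} {v : V}
    (hv : f v = c • v) : g v = c⁻¹ • v := by
  rcases eq_or_ne c 0 with rfl | hc
  · have : v = 0 := by simpa [hv] using (LinearMap.congr_fun hgf v).symm
    simp [this]
  · calc g v = c⁻¹ • g (c • v) := by rw [map_smul, inv_smul_smul₀ hc]
      _ = c⁻¹ • v := by rw [← hv, ← mul_apply, hgf, one_apply]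

theorem exists_hasEigenvector_of_commute [FiniteDimensional 𝕜 V] [IsAlgClosed 𝕜]
    {f g : End 𝕜 V} (hfg : Commute f g) {μ : 𝕜} (hμ : f.HasEigenvalue μ) :
    ∃ c v, f.HasEigenvector μ v ∧ g.HasEigenvector c v := by
  have hmaps : ∀ x ∈ f.eigenspace μ, g x ∈ f.eigenspace μ :=
    fun x hx => mapsTo_genEigenspace_of_comm hfg μ 1 hx
  have : Nontrivial (f.eigenspace μ) := Submodule.nontrivial_iff_ne_bot.mpr hμ
  obtain ⟨c, hc⟩ := exists_eigenvalue (g.restrict hmaps)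
  obtain ⟨w, hw, hw0⟩ := hc.exists_hasEigenvector
  refine ⟨c, w, ⟨w.2, by simpa using hw0⟩, ?_, by simpa using hw0⟩
  rw [mem_eigenspace_iff] at hw ⊢
  simpa using congrArg Subtype.val hw

/-- The string `v, A v, A² v, …` stops: its nonzero members are eigenvectors of `K` for the
distinct eigenvalues `c ^ j * d`, and `K` has only finitely many eigenvalues. -/
theorem exists_pow_hasEigenvector_apply_eq_zero [FiniteDimensional 𝕜 V] {K A : End 𝕜 V}
    {c d : 𝕜} (hc : Function.Injective (c ^ · : ℕ → 𝕜)) (hd : d ≠ 0)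
    (hKA : K * A = c • (A * K)) {v : V} (hv : K.HasEigenvector d v) :
    ∃ j : ℕ, K.HasEigenvector (c ^ j * d) ((A ^ j) v) ∧ A ((A ^ j) v) = 0 := by
  have hKA_pow : ∀ j : ℕ, K * A ^ j = c ^ j • (A ^ j * K) := by
    intro j
    induction j with
    | zero => simp
    | succ j ih =>
      rw [pow_succ, ← mul_assoc, ih, smul_mul_assoc, mul_assoc, hKA, mul_smul_comm, smul_smul,
        ← pow_succ, mul_assoc]
  have hK_pow : ∀ j : ℕ, K ((A ^ j) v) = (c ^ j * d) • (A ^ j) v := by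
    intro j
    rw [← mul_apply, hKA_pow, LinearMap.smul_apply, mul_apply, hv.apply_eq_smul, map_smul,
      smul_smul]
  have hvanish : ∃ n, (A ^ n) v = 0 := by
    by_contra! hne
    have hinj : Function.Injective fun j : ℕ => c ^ j * d := (mul_left_injective₀ hd).comp hc
    exact Set.infinite_of_injective_forall_mem hinj
      (fun j => hasEigenvalue_of_hasEigenvector ⟨mem_eigenspace_iff.mpr (hK_pow j), hne j⟩)
      (finite_hasEigenvalue K)
  obtain ⟨j, hj, hj1⟩ :=
    Nat.exists_not_and_succ_of_not_zero_of_exists (by simpa using hv.2) hvanish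
  exact ⟨j, ⟨mem_eigenspace_iff.mpr (hK_pow j), hj⟩, by rwa [pow_succ', mul_apply] at hj1⟩

end Module.End

section PowInjective

variable {𝕜 : Type*} [Field 𝕜] {q : 𝕜}

theorem ne_zero_of_injective_pow (hq : Function.Injective (q ^ · : ℕ → 𝕜)) : q ≠ 0 := by
  rintro rfl
  exact absurd (hq (by simp)) (by decide : (1 : ℕ) ≠ 2)

theorem inv_sub_ne_zero_of_injective_pow (hq : Function.Injective (q ^ · : ℕ → 𝕜)) :
    q⁻¹ - q ≠ 0 := by
  have hq0 := ne_zero_of_injective_pow hq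
  intro h0
  have : q ^ 2 = q ^ 0 := by field_simp at h0; linear_combination -h0
  exact two_ne_zero (hq this)

theorem injective_pow_sq (hq : Function.Injective (q ^ · : ℕ → 𝕜)) :
    Function.Injective ((q ^ 2) ^ · : ℕ → 𝕜) := by
  simpa [Function.comp_def, ← pow_mul] using hq.comp (mul_right_injective₀ two_ne_zero)

end PowInjective

theorem eq_or_mul_eq_one_of_add_inv_eq_add_inv {𝕜 : Type*} [Field 𝕜] {z w : 𝕜} (hz : z ≠ 0)
    (hw : w ≠ 0) (h : z + z⁻¹ = w + w⁻¹) : z = w ∨ z * w = 1 := by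
  have key : (z - w) * (z * w - 1) = 0 := by
    field_simp at h
    linear_combination h
  rcases mul_eq_zero.mp key with h1 | h1
  · exact Or.inl (sub_eq_zero.mp h1)
  · exact Or.inr (sub_eq_zero.mp h1)

namespace UqSl2Relations

open Module Module.End

variable {𝕜 V : Type*} [Field 𝕜] [AddCommGroup V] [Module 𝕜 V] {q : 𝕜} {E F K K' : End 𝕜 V}

theorem casimir_apply_of_F_eq_zero (h : UqSl2Relations q E F K K') {c : 𝕜} {v : V}
    (hK : K v = c • v) (hF : F v = 0) :
    casimir q E F K K' v = (((q⁻¹ - q) ^ 2)⁻¹ * (q * c + (q * c)⁻¹)) • v := by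
  have hK' := apply_eq_inv_smul_of_mul_eq_one h.inv_mul hK
  simp only [casimir, LinearMap.add_apply, mul_apply, LinearMap.smul_apply, hF, map_zero, hK, hK']
  match_scalars
  ring

theorem casimir_apply_of_E_eq_zero (h : UqSl2Relations q E F K K') {c : 𝕜} {v : V}
    (hK' : K' v = c • v) (hE : E v = 0) :
    casimir q E F K K' v = (((q⁻¹ - q) ^ 2)⁻¹ * (q * c + (q * c)⁻¹)) • v := by
  have hK := apply_eq_inv_smul_of_mul_eq_one h.mul_inv hK'
  simp only [h.casimir_eq, LinearMap.add_apply, mul_apply, LinearMap.smul_apply, hE, map_zero,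
    hK, hK']
  match_scalars
  ring

theorem exists_highest_weight_vector [FiniteDimensional 𝕜 V] [IsAlgClosed 𝕜]
    (hq : Function.Injective (q ^ · : ℕ → 𝕜)) (h : UqSl2Relations q E F K K') {μ : 𝕜}
    (hμ : (casimir q E F K K').HasEigenvalue μ) :
    ∃ c v, c ≠ 0 ∧ (casimir q E F K K').HasEigenvector μ v ∧ K.HasEigenvector c v ∧
      F v = 0 := by
  have hq0 := ne_zero_of_injective_pow hq
  obtain ⟨c, v, hCv, hKv⟩ := exists_hasEigenvector_of_commute (h.commute_casimir_K hq0) hμ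
  have hc : c ≠ 0 := by
    rintro rfl
    apply hKv.2
    simpa [hKv.apply_eq_smul] using (LinearMap.congr_fun h.inv_mul v).symm
  obtain ⟨j, hKw, hFw⟩ :=
    exists_pow_hasEigenvector_apply_eq_zero (injective_pow_sq hq) hc h.mul_F hKv
  refine ⟨_, _, mul_ne_zero (pow_ne_zero _ (pow_ne_zero _ hq0)) hc, ⟨?_, hKw.2⟩, hKw, hFw⟩
  exact mapsTo_genEigenspace_of_comm ((h.commute_casimir_F hq0).pow_right j) μ 1 hCv.1

theorem exists_lowest_weight_vector [FiniteDimensional 𝕜 V]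
    (hq : Function.Injective (q ^ · : ℕ → 𝕜)) (h : UqSl2Relations q E F K K') {μ c : 𝕜}
    {v : V} (hc : c ≠ 0) (hv : (casimir q E F K K').HasEigenvector μ v)
    (hKv : K.HasEigenvector c v) :
    ∃ (b : ℕ) (w : V), (casimir q E F K K').HasEigenvector μ w ∧
      K'.HasEigenvector ((q ^ 2) ^ b * c⁻¹) w ∧ E w = 0 := by
  have hq0 := ne_zero_of_injective_pow hq
  have hK'v : K'.HasEigenvector c⁻¹ v :=
    ⟨mem_eigenspace_iff.mpr (apply_eq_inv_smul_of_mul_eq_one h.inv_mul hKv.apply_eq_smul), hKv.2⟩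
  obtain ⟨b, hK'w, hEw⟩ := exists_pow_hasEigenvector_apply_eq_zero (injective_pow_sq hq)
    (inv_ne_zero hc) (h.inv_mul_E hq0) hK'v
  refine ⟨b, _, ⟨?_, hK'w.2⟩, hK'w, hEw⟩
  exact mapsTo_genEigenspace_of_comm ((h.commute_casimir_E hq0).pow_right b) μ 1 hv.1

theorem exists_sq_eq_of_hasEigenvalue_casimir [FiniteDimensional 𝕜 V] [IsAlgClosed 𝕜]
    (hq : Function.Injective (q ^ · : ℕ → 𝕜)) (h : UqSl2Relations q E F K K') {μ : 𝕜}
    (hμ : (casimir q E F K K').HasEigenvalue μ) :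
    ∃ (c : 𝕜) (b : ℕ), K.HasEigenvalue c ∧ c ^ 2 = q ^ (2 * b) ∧
      μ = ((q⁻¹ - q) ^ 2)⁻¹ * (q * c + (q * c)⁻¹) := by
  have hq0 := ne_zero_of_injective_pow hq
  have hΔ := inv_sub_ne_zero_of_injective_pow hq
  obtain ⟨c, v, hc, hCv, hKv, hFv⟩ := h.exists_highest_weight_vector hq hμ
  obtain ⟨b, w, hCw, hK'w, hEw⟩ := h.exists_lowest_weight_vector hq hc hCv hKv
  have hμv := smul_left_injective 𝕜 hCv.2
    (hCv.apply_eq_smul.symm.trans (h.casimir_apply_of_F_eq_zero hKv.apply_eq_smul hFv))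
  have hμw := smul_left_injective 𝕜 hCw.2
    (hCw.apply_eq_smul.symm.trans (h.casimir_apply_of_E_eq_zero hK'w.apply_eq_smul hEw))
  refine ⟨c, b, hasEigenvalue_of_hasEigenvector hKv, ?_, hμv⟩
  have hg : q * c + (q * c)⁻¹ = q * ((q ^ 2) ^ b * c⁻¹) + (q * ((q ^ 2) ^ b * c⁻¹))⁻¹ :=
    mul_left_cancel₀ (inv_ne_zero (pow_ne_zero 2 hΔ)) (hμv.symm.trans hμw)
  rcases eq_or_mul_eq_one_of_add_inv_eq_add_inv (mul_ne_zero hq0 hc)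
    (mul_ne_zero hq0 (mul_ne_zero (pow_ne_zero _ (pow_ne_zero _ hq0)) (inv_ne_zero hc))) hg
    with h1 | h1
  · field_simp at h1
    rwa [pow_mul]
  · have : q ^ (2 * b + 2) = q ^ 0 := by
      field_simp at h1
      rw [pow_zero, pow_add, pow_mul, ← h1]
      ring
    exact absurd (hq this) (by omega)

end UqSl2Relations

open Matrix

section PiKron

variable {ι α R : Type*} [Fintype ι] [CommSemiring R]

/-- The matrix of the tensor product `⨂ i, M i` in the basis indexed by `ι → α`. -/
def Matrix.piKron (M : ι → Matrix α α R) : Matrix (ι → α) (ι → α) R :=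
  of fun η η' => ∏ i, M i (η i) (η' i)

theorem Matrix.piKron_apply (M : ι → Matrix α α R) (η η' : ι → α) :
    piKron M η η' = ∏ i, M i (η i) (η' i) := rfl

theorem Matrix.piKron_mul [DecidableEq ι] [Fintype α] (M N : ι → Matrix α α R) :
    piKron M * piKron N = piKron (M * N) := by
  ext η η''
  simp only [mul_apply, piKron_apply, Pi.mul_apply, Fintype.prod_sum, ← Finset.prod_mul_distrib]

theorem Matrix.piKron_smul (c : ι → R) (M : ι → Matrix α α R) :
    piKron (c • M) = (∏ i, c i) • piKron M := by
  ext η η'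
  simp [piKron_apply, Finset.prod_mul_distrib]

theorem Matrix.piKron_one [DecidableEq α] : piKron (1 : ι → Matrix α α R) = 1 := by
  ext η η'
  simp [piKron_apply, one_apply, Finset.prod_boole, funext_iff]

theorem Matrix.piKron_diagonal [DecidableEq α] (d : ι → α → R) :
    piKron (fun i => diagonal (d i)) = diagonal fun η => ∏ i, d i (η i) := by
  ext η η'
  simp only [piKron_apply, diagonal_apply, Finset.prod_ite_zero, funext_iff, Finset.mem_univ,
    true_implies]

theorem Matrix.piKron_mul_eq_smul_mul [DecidableEq ι] [Fintype α] {M N : ι → Matrix α α R}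
    (c : ι → R) (h : ∀ i, M i * N i = c i • (N i * M i)) :
    piKron M * piKron N = (∏ i, c i) • (piKron N * piKron M) := by
  rw [piKron_mul, piKron_mul, ← piKron_smul]
  exact congrArg piKron (funext h)

end PiKron

section StringOp

variable {L : ℕ}

theorem stringOp_eq_piKron (ℓ c ρ : Matrix (Fin 2) (Fin 2) ℂ) (x : Fin L) :
    stringOp ℓ c ρ x = piKron fun y => if y < x then ℓ else if y = x then c else ρ := by
  ext η η'
  have hx : (Finset.univ.filter fun y => ¬y < x).filter (· = x) = {x} := by
    ext y
    simp only [Finset.mem_filter, Finset.mem_univ, true_and, Finset.mem_singleton]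
    exact ⟨fun h => h.2, by rintro rfl; exact ⟨lt_irrefl _, rfl⟩⟩
  have hgt : (Finset.univ.filter fun y => ¬y < x).filter (¬· = x) =
      Finset.univ.filter fun y => x < y := by
    ext y
    simp only [Finset.mem_filter, Finset.mem_univ, true_and]
    exact ⟨fun h => lt_of_le_of_ne (not_lt.mp h.1) (Ne.symm h.2), fun h => ⟨not_lt.mpr h.le, h.ne'⟩⟩
  have hsite : ∀ y, (if y < x then ℓ else if y = x then c else ρ) (η y) (η' y) =
      if y < x then ℓ (η y) (η' y) else if y = x then c (η y) (η' y) else ρ (η y) (η' y) := by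
    intro y
    split_ifs <;> rfl
  rw [piKron_apply, Finset.prod_congr rfl fun y _ => hsite y, Finset.prod_ite, Finset.prod_ite,
    hx, hgt, Finset.prod_singleton, ← mul_assoc]
  rfl

theorem stringOp_mul_stringOp (ℓ c ρ ℓ' c' ρ' : Matrix (Fin 2) (Fin 2) ℂ) (x : Fin L) :
    stringOp ℓ c ρ x * stringOp ℓ' c' ρ' x = stringOp (ℓ * ℓ') (c * c') (ρ * ρ') x := by
  simp only [stringOp_eq_piKron, piKron_mul]
  congr 1
  funext y
  simp only [Pi.mul_apply]
  split_ifs <;> rfl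

theorem stringOp_sub (ℓ c c' ρ : Matrix (Fin 2) (Fin 2) ℂ) (x : Fin L) :
    stringOp ℓ (c - c') ρ x = stringOp ℓ c ρ x - stringOp ℓ c' ρ x := by
  ext η η'
  simp only [Matrix.sub_apply, stringOp]
  ring

theorem stringOp_smul (ℓ c ρ : Matrix (Fin 2) (Fin 2) ℂ) (a : ℂ) (x : Fin L) :
    stringOp ℓ (a • c) ρ x = a • stringOp ℓ c ρ x := by
  ext η η'
  simp only [Matrix.smul_apply, stringOp, smul_eq_mul]
  ring

end StringOp

open Finset in
theorem prod_ite_inv_eq_zpow {ι K : Type*} [Fintype ι] [Field K] {a : K} (ha : a ≠ 0)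
    (p : ι → Prop) [DecidablePred p] :
    ∏ i, (if p i then a⁻¹ else a) = a ^ (2 * (#{i | ¬p i} : ℤ) - Fintype.card ι) := by
  have hcard := card_filter_add_card_filter_not (s := univ) p
  rw [card_univ] at hcard
  rw [prod_ite, prod_const, prod_const, ← hcard,
    show 2 * (#{i | ¬p i} : ℤ) - ((#{i | p i} + #{i | ¬p i} : ℕ) : ℤ) = #{i | ¬p i} - #{i | p i} by
      push_cast; ring,
    zpow_sub₀ ha, zpow_natCast, zpow_natCast, inv_pow, div_eq_mul_inv, mul_comm]

theorem injective_zpow_ofReal {q : ℝ} (hq : 0 < q) (hq1 : q ≠ 1) :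
    Function.Injective (fun n : ℤ => (q : ℂ) ^ n) := fun m n h =>
  zpow_right_injective₀ hq hq1 (Complex.ofReal_injective (by simpa using h))

namespace QSpinChain

noncomputable def tMat (q : ℂ) : Matrix (Fin 2) (Fin 2) ℂ := !![q⁻¹, 0; 0, q]

noncomputable def tInvMat (q : ℂ) : Matrix (Fin 2) (Fin 2) ℂ := !![q, 0; 0, q⁻¹]

def sigmaPlus : Matrix (Fin 2) (Fin 2) ℂ := !![0, 1; 0, 0]

def sigmaMinus : Matrix (Fin 2) (Fin 2) ℂ := !![0, 0; 1, 0]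

noncomputable def Splus (L : ℕ) (q : ℂ) : Matrix (Fin L → Fin 2) (Fin L → Fin 2) ℂ :=
  ∑ x : Fin L, stringOp (tMat q) sigmaPlus 1 x

noncomputable def Sminus (L : ℕ) (q : ℂ) : Matrix (Fin L → Fin 2) (Fin L → Fin 2) ℂ :=
  ∑ x : Fin L, stringOp 1 sigmaMinus (tInvMat q) x

noncomputable def T (L : ℕ) (q : ℂ) : Matrix (Fin L → Fin 2) (Fin L → Fin 2) ℂ :=
  piKron fun _ : Fin L => tMat q

noncomputable def Tinv (L : ℕ) (q : ℂ) : Matrix (Fin L → Fin 2) (Fin L → Fin 2) ℂ :=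
  piKron fun _ : Fin L => tInvMat q

variable {L : ℕ} {q : ℂ}

theorem tMat_mul_tInvMat (hq : q ≠ 0) : tMat q * tInvMat q = 1 := by
  ext i j; fin_cases i <;> fin_cases j <;> simp [tMat, tInvMat, hq]

theorem tInvMat_mul_tMat (hq : q ≠ 0) : tInvMat q * tMat q = 1 := by
  ext i j; fin_cases i <;> fin_cases j <;> simp [tMat, tInvMat, hq]

theorem tMat_mul_tInvMat_comm : tMat q * tInvMat q = tInvMat q * tMat q := by
  ext i j; fin_cases i <;> fin_cases j <;> simp [tMat, tInvMat, mul_comm]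

theorem tMat_mul_sigmaPlus : tMat q * sigmaPlus = (q ^ 2)⁻¹ • (sigmaPlus * tMat q) := by
  ext i j; fin_cases i <;> fin_cases j <;> simp [tMat, sigmaPlus]; field_simp

theorem tMat_mul_sigmaMinus : tMat q * sigmaMinus = q ^ 2 • (sigmaMinus * tMat q) := by
  ext i j; fin_cases i <;> fin_cases j <;> simp [tMat, sigmaMinus]; field_simp

theorem sigmaPlus_mul_tInvMat : sigmaPlus * tInvMat q = (q ^ 2)⁻¹ • (tInvMat q * sigmaPlus) := by
  ext i j; fin_cases i <;> fin_cases j <;> simp [tInvMat, sigmaPlus]; field_simp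

theorem sigmaPlus_mul_sigmaMinus_sub (hΔ : q⁻¹ - q ≠ 0) :
    sigmaPlus * sigmaMinus - sigmaMinus * sigmaPlus = (q⁻¹ - q)⁻¹ • (tMat q - tInvMat q) := by
  ext i j; fin_cases i <;> fin_cases j <;> simp [tMat, tInvMat, sigmaPlus, sigmaMinus, hΔ]
  rw [← neg_sub q⁻¹ q, mul_neg, inv_mul_cancel₀ hΔ]

theorem tMat_eq_diagonal (q : ℂ) : tMat q = diagonal fun a => if a = 0 then q⁻¹ else q := by
  ext i j; fin_cases i <;> fin_cases j <;> simp [tMat]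

theorem tInvMat_eq_diagonal (q : ℂ) : tInvMat q = diagonal fun a => if a = 0 then q else q⁻¹ := by
  ext i j; fin_cases i <;> fin_cases j <;> simp [tInvMat]

theorem T_eq_diagonal (L : ℕ) (q : ℂ) :
    T L q = diagonal fun η : Fin L → Fin 2 => ∏ x, if η x = 0 then q⁻¹ else q := by
  rw [T, tMat_eq_diagonal, piKron_diagonal]

theorem Tinv_eq_diagonal (L : ℕ) (q : ℂ) :
    Tinv L q = diagonal fun η : Fin L → Fin 2 => ∏ x, if η x = 0 then q else q⁻¹ := by
  rw [Tinv, tInvMat_eq_diagonal, piKron_diagonal]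

theorem T_mul_Tinv (hq : q ≠ 0) : T L q * Tinv L q = 1 := by
  rw [T, Tinv, piKron_mul, ← piKron_one]
  exact congrArg piKron (funext fun _ => tMat_mul_tInvMat hq)

theorem Tinv_mul_T (hq : q ≠ 0) : Tinv L q * T L q = 1 := by
  rw [T, Tinv, piKron_mul, ← piKron_one]
  exact congrArg piKron (funext fun _ => tInvMat_mul_tMat hq)

theorem T_mul_stringOp_sigmaPlus (x : Fin L) :
    T L q * stringOp (tMat q) sigmaPlus 1 x =
      (q ^ 2)⁻¹ • (stringOp (tMat q) sigmaPlus 1 x * T L q) := by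
  rw [T, stringOp_eq_piKron, piKron_mul_eq_smul_mul (Pi.mulSingle x (q ^ 2)⁻¹),
    Fintype.prod_pi_mulSingle']
  intro y
  rcases lt_trichotomy y x with h | rfl | h
  · simp [h, h.ne]
  · simp [tMat_mul_sigmaPlus]
  · simp [not_lt_of_gt h, h.ne']

theorem T_mul_stringOp_sigmaMinus (x : Fin L) :
    T L q * stringOp 1 sigmaMinus (tInvMat q) x =
      q ^ 2 • (stringOp 1 sigmaMinus (tInvMat q) x * T L q) := by
  rw [T, stringOp_eq_piKron, piKron_mul_eq_smul_mul (Pi.mulSingle x (q ^ 2)),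
    Fintype.prod_pi_mulSingle']
  intro y
  rcases lt_trichotomy y x with h | rfl | h
  · simp [h, h.ne]
  · simp [tMat_mul_sigmaMinus]
  · simp [not_lt_of_gt h, h.ne', tMat_mul_tInvMat_comm]

/-- When `y < x`, the sites `y` and `x` contribute the inverse factors `q²` and `q⁻²`. -/
theorem commute_stringOp_of_ne (hq : q ≠ 0) {x y : Fin L} (hxy : x ≠ y) :
    Commute (stringOp (tMat q) sigmaPlus 1 x) (stringOp 1 sigmaMinus (tInvMat q) y) := by
  rw [Commute, SemiconjBy, stringOp_eq_piKron, stringOp_eq_piKron,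
    piKron_mul_eq_smul_mul (fun z => Pi.mulSingle y (if y < x then q ^ 2 else 1) z *
      Pi.mulSingle x (if y < x then (q ^ 2)⁻¹ else 1) z)]
  · rw [Finset.prod_mul_distrib, Fintype.prod_pi_mulSingle', Fintype.prod_pi_mulSingle']
    split_ifs
    · rw [mul_inv_cancel₀ (pow_ne_zero 2 hq), one_smul]
    · rw [mul_one, one_smul]
  intro z
  rcases lt_trichotomy z x with h1 | rfl | h1 <;> rcases lt_trichotomy z y with h2 | rfl | h2
  all_goals simp_all [lt_asymm, ne_of_gt, ne_of_lt, tMat_mul_sigmaMinus, sigmaPlus_mul_tInvMat,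
    tMat_mul_tInvMat_comm]

theorem stringOp_commutator_self (hΔ : q⁻¹ - q ≠ 0) (x : Fin L) :
    stringOp (tMat q) sigmaPlus 1 x * stringOp 1 sigmaMinus (tInvMat q) x -
        stringOp 1 sigmaMinus (tInvMat q) x * stringOp (tMat q) sigmaPlus 1 x =
      (q⁻¹ - q)⁻¹ • (stringOp (tMat q) (tMat q) (tInvMat q) x -
        stringOp (tMat q) (tInvMat q) (tInvMat q) x) := by
  simp only [stringOp_mul_stringOp, mul_one, one_mul]
  rw [← stringOp_sub, sigmaPlus_mul_sigmaMinus_sub hΔ, stringOp_smul, stringOp_sub]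

theorem sum_stringOp_sub_stringOp :
    ∑ x : Fin L, (stringOp (tMat q) (tMat q) (tInvMat q) x -
        stringOp (tMat q) (tInvMat q) (tInvMat q) x) = T L q - Tinv L q := by
  let Φ : ℕ → Matrix (Fin L → Fin 2) (Fin L → Fin 2) ℂ := fun j =>
    piKron fun y : Fin L => if (y : ℕ) < j then tMat q else tInvMat q
  have hΦ : ∀ x : Fin L, stringOp (tMat q) (tMat q) (tInvMat q) x = Φ (x + 1) ∧
      stringOp (tMat q) (tInvMat q) (tInvMat q) x = Φ x := by
    intro x
    simp only [stringOp_eq_piKron, Φ]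
    constructor <;> congr 1 <;> funext y <;> split_ifs <;>
      first | rfl | (exfalso; simp only [Fin.lt_def, Fin.ext_iff] at *; omega)
  rw [Finset.sum_congr rfl fun x _ => by rw [(hΦ x).1, (hΦ x).2],
    Fin.sum_univ_eq_sum_range (fun j => Φ (j + 1) - Φ j), Finset.sum_range_sub]
  simp [Φ, T, Tinv]

theorem Splus_mul_Sminus_sub (hΔ : q⁻¹ - q ≠ 0) :
    Splus L q * Sminus L q - Sminus L q * Splus L q = (q⁻¹ - q)⁻¹ • (T L q - Tinv L q) := by
  have hq : q ≠ 0 := by rintro rfl; simp at hΔ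
  rw [Splus, Sminus, Finset.sum_mul_sum, Finset.sum_mul_sum, Finset.sum_comm (γ := Fin L),
    ← Finset.sum_sub_distrib, ← sum_stringOp_sub_stringOp, Finset.smul_sum]
  refine Finset.sum_congr rfl fun x _ => ?_
  rw [← Finset.sum_sub_distrib, ← stringOp_commutator_self hΔ]
  refine Finset.sum_eq_single x (fun y _ hyx => ?_) (by simp)
  exact sub_eq_zero.mpr (commute_stringOp_of_ne hq hyx).eq

theorem uqSl2Relations (hΔ : q⁻¹ - q ≠ 0) :
    UqSl2Relations q (Splus L q) (Sminus L q) (T L q) (Tinv L q) := by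
  have hq : q ≠ 0 := by rintro rfl; simp at hΔ
  refine ⟨T_mul_Tinv hq, Tinv_mul_T hq, ?_, ?_, Splus_mul_Sminus_sub hΔ⟩
  · rw [Splus, Finset.mul_sum, Finset.sum_mul, Finset.smul_sum]
    exact Finset.sum_congr rfl fun x _ => T_mul_stringOp_sigmaPlus x
  · rw [Sminus, Finset.mul_sum, Finset.sum_mul, Finset.smul_sum]
    exact Finset.sum_congr rfl fun x _ => T_mul_stringOp_sigmaMinus x

theorem exists_eq_zpow_of_hasEigenvalue_T {c : ℂ} (hq : q ≠ 0)
    (hc : Module.End.HasEigenvalue (toLin' (T L q)) c) : ∃ n ≤ L, c = q ^ (2 * (n : ℤ) - L) := by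
  rw [T_eq_diagonal, hasEigenvalue_toLin'_diagonal_iff] at hc
  obtain ⟨η, rfl⟩ := hc
  refine ⟨(Finset.univ.filter fun x => ¬η x = 0).card,
    (Finset.card_filter_le _ _).trans_eq (by simp), ?_⟩
  rw [prod_ite_inv_eq_zpow hq, Fintype.card_fin]

theorem exists_eq_of_hasEigenvalue_casimir (hq : Function.Injective (fun n : ℤ => q ^ n)) {μ : ℂ}
    (hμ : Module.End.HasEigenvalue
      (toLinAlgEquiv' (casimir q (Splus L q) (Sminus L q) (T L q) (Tinv L q))) μ) :
    ∃ k ≤ L, μ = (q ^ (-(k + 1 : ℤ)) + q ^ (k + 1)) / (q⁻¹ - q) ^ 2 := by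
  have hqℕ : Function.Injective (q ^ · : ℕ → ℂ) := by
    simpa [Function.comp_def] using hq.comp Nat.cast_injective
  have hq0 := ne_zero_of_injective_pow hqℕ
  have hrel := (uqSl2Relations (inv_sub_ne_zero_of_injective_pow hqℕ)).map
    (toLinAlgEquiv' : Matrix (Fin L → Fin 2) (Fin L → Fin 2) ℂ ≃ₐ[ℂ] _)
  rw [map_casimir] at hμ
  obtain ⟨c, b, hc, hcb, rfl⟩ := hrel.exists_sq_eq_of_hasEigenvalue_casimir hqℕ hμ
  obtain ⟨n, hn, rfl⟩ := exists_eq_zpow_of_hasEigenvalue_T hq0 hc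
  have hb : 2 * (n : ℤ) - L = b := by
    have h2 : q ^ ((2 * (n : ℤ) - L) * 2) = q ^ ((2 * b : ℕ) : ℤ) := by
      rw [_root_.zpow_mul, zpow_natCast, ← hcb]
      norm_cast
    have := hq h2
    push_cast at this
    omega
  refine ⟨b, by omega, ?_⟩
  rw [hb, div_eq_inv_mul, _root_.zpow_neg, ← zpow_natCast]
  push_cast
  rw [zpow_add_one₀ hq0, zpow_natCast]
  ring

end QSpinChain

/-- Every eigenvalue of the `SU_q(2)` Casimir operator
`C = S⁺S⁻ + ((qT)⁻¹ + qT)/(q⁻¹ − q)²`, `T = t^{⊗L}`, on `(ℂ²)^{⊗L}` is of the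
form `(q^{−(2S+1)} + q^{2S+1})/(q⁻¹ − q)²` with `S ∈ {0, 1/2, 1, ..., L/2}`
(below, `S = k/2` with `k ≤ L`). -/
theorem suq2_casimir_eigenvalues
    (L : ℕ) (q : ℝ) (hq : 0 < q) (hq1 : q < 1)
    (tmat tmatInv sp sm : Matrix (Fin 2) (Fin 2) ℂ)
    (htmat : tmat = !![(q : ℂ)⁻¹, 0; 0, (q : ℂ)])
    (htmatInv : tmatInv = !![(q : ℂ), 0; 0, (q : ℂ)⁻¹])
    (hsp : sp = !![0, 1; 0, 0]) (hsm : sm = !![0, 0; 1, 0])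
    (Splus Sminus : Matrix (Fin L → Fin 2) (Fin L → Fin 2) ℂ)
    (hSplus : Splus = ∑ x : Fin L, stringOp tmat sp 1 x)
    (hSminus : Sminus = ∑ x : Fin L, stringOp 1 sm tmatInv x)
    (T Tinv : Matrix (Fin L → Fin 2) (Fin L → Fin 2) ℂ)
    (hT : T = Matrix.diagonal (fun η : Fin L → Fin 2 =>
      ∏ x, if η x = 0 then (q : ℂ)⁻¹ else (q : ℂ)))
    (hTinv : Tinv = Matrix.diagonal (fun η : Fin L → Fin 2 =>
      ∏ x, if η x = 0 then (q : ℂ) else (q : ℂ)⁻¹))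
    (C : Matrix (Fin L → Fin 2) (Fin L → Fin 2) ℂ)
    (hC : C = Splus * Sminus +
      (((q : ℂ)⁻¹ - (q : ℂ))^2)⁻¹ • ((q : ℂ)⁻¹ • Tinv + (q : ℂ) • T)) :
    ∀ μ : ℂ, (∃ ψ : (Fin L → Fin 2) → ℂ, ψ ≠ 0 ∧ C.mulVec ψ = μ • ψ) →
      ∃ k : ℕ, k ≤ L ∧
        μ = ((q : ℂ) ^ (-(k + 1 : ℤ)) + (q : ℂ) ^ ((k + 1 : ℕ))) /
          ((q : ℂ)⁻¹ - (q : ℂ))^2 := by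
  rintro μ ⟨ψ, hψ, hCψ⟩
  have hC' : C = casimir (q : ℂ) (QSpinChain.Splus L q) (QSpinChain.Sminus L q)
      (QSpinChain.T L q) (QSpinChain.Tinv L q) := by
    rw [hC, hT, hTinv, QSpinChain.T_eq_diagonal, QSpinChain.Tinv_eq_diagonal, hSplus, hSminus,
      htmat, htmatInv, hsp, hsm]
    rfl
  subst hC'
  exact QSpinChain.exists_eq_of_hasEigenvalue_casimir (injective_zpow_ofReal hq hq1.ne)
    (Module.End.hasEigenvalue_of_hasEigenvector ⟨Module.End.mem_eigenspace_iff.mpr hCψ, hψ⟩)
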